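/- Under a gauge transformation, at every point (x,v) with |L|²(x,v) ≠ 0 and for all r, s, the tensor B transforms as B'^r_s = B^r_s + Σ_{m,q,k} L_m T^m_{sq} P^q_k (A^{rk} − A^{kr}). -/

import Mathlib

/- Coordinate formalization of extended tensor fields in v- and p-representation
   for a generalized Legendre transformation λ(x,v) = (x, L(x,v)). -/

noncomputable section

open scoped BigOperators

/-- A point of the (co)tangent bundle in a single chart: a pair (x, v) or (x, p). -/
abbrev Pt (n : ℕ) := (Fin n → ℝ) × (Fin n → ℝ)

/-- An indexed family of scalar functions (components of a (co)vector field). -/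
abbrev Fam (n : ℕ) := Fin n → Pt n → ℝ

/-- Components Γ^k_{ij} of an extended connection (or of a gauge tensor T^k_{ij}). -/
abbrev Conn (n : ℕ) := Fin n → Fin n → Fin n → Pt n → ℝ

variable {n : ℕ}

/-- Kronecker delta δ^i_j. -/
def kron (i j : Fin n) : ℝ := if i = j then 1 else 0

/-- Partial derivative ∂f/∂x^m (first slot). -/
def pdx (m : Fin n) (f : Pt n → ℝ) (q : Pt n) : ℝ :=
  fderiv ℝ f q (Pi.single m 1, 0)

/-- Partial derivative ∂f/∂v^m (resp. ∂f/∂p_m): second slot. -/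
def pdv (m : Fin n) (f : Pt n → ℝ) (q : Pt n) : ℝ :=
  fderiv ℝ f q (0, Pi.single m 1)

/-- The generalized Legendre transformation λ(x,v) = (x, L(x,v)). -/
def lam (L : Fam n) (q : Pt n) : Pt n := (q.1, fun i => L i q)

/-- The inverse map λ⁻¹(x,p) = (x, V(x,p)). -/
def lamInv (V : Fam n) (q : Pt n) : Pt n := (q.1, fun i => V i q)

/-- g_{rk} = ∂L_r/∂v^k. -/
def gdn (L : Fam n) (r k : Fin n) (q : Pt n) : ℝ := pdv k (L r) q

/-- L^i = Σ_q L_q g^{qi}. -/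
def Lup (L : Fam n) (ginv : Fin n → Fin n → Pt n → ℝ) (i : Fin n) (q : Pt n) : ℝ :=
  ∑ j, L j q * ginv j i q

/-- |L|² = Σ_s L_s L^s. -/
def L2 (L : Fam n) (ginv : Fin n → Fin n → Pt n → ℝ) (q : Pt n) : ℝ :=
  ∑ s, L s q * Lup L ginv s q

/-- p-representation: W^i = Σ_s p_s ∂V^s/∂p_i. -/
def Wp (V : Fam n) (i : Fin n) (q : Pt n) : ℝ :=
  ∑ s, q.2 s * pdv i (V s) q

/-- p-representation: Ω = Σ_s p_s W^s. -/
def Omga (V : Fam n) (q : Pt n) : ℝ := ∑ s, q.2 s * Wp V s q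

/-- p-representation projector P̌^i_j = δ^i_j − W^i p_j / Ω. -/
def Pp (V : Fam n) (i j : Fin n) (q : Pt n) : ℝ :=
  kron i j - Wp V i q * q.2 j / Omga V q

/-- v-representation projector P^i_j = δ^i_j − L^i L_j / |L|². -/
def Pv (L : Fam n) (ginv : Fin n → Fin n → Pt n → ℝ) (i j : Fin n) (q : Pt n) : ℝ :=
  kron i j - Lup L ginv i q * L j q / L2 L ginv q

/-- Scalar part of the v-representation horizontal covariant derivative:
    ∂f/∂x^m − Σ_{a,b} v^a Γ^b_{am} ∂f/∂v^b. -/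
def vS (Γ : Conn n) (m : Fin n) (f : Pt n → ℝ) (q : Pt n) : ℝ :=
  pdx m f q - ∑ a, ∑ b, q.2 a * Γ b a m q * pdv b f q

/-- v-representation ∇_m X_j of a covector field. -/
def vCov (Γ : Conn n) (m : Fin n) (X : Fam n) (j : Fin n) (q : Pt n) : ℝ :=
  vS Γ m (X j) q - ∑ b, Γ b m j q * X b q

/-- v-representation ∇_m X^i of a vector field. -/
def vVec (Γ : Conn n) (m : Fin n) (X : Fam n) (i : Fin n) (q : Pt n) : ℝ :=
  vS Γ m (X i) q + ∑ a, Γ i m a q * X a q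

/-- v-representation ∇_k Y_{m r} of a (0,2) tensor field. -/
def vCov2 (Γ : Conn n) (k : Fin n) (Y : Fin n → Fin n → Pt n → ℝ)
    (m r : Fin n) (q : Pt n) : ℝ :=
  vS Γ k (Y m r) q - (∑ b, Γ b k m q * Y b r q) - (∑ b, Γ b k r q * Y m b q)

/-- v-representation ∇_m T^k_{ij} of a (1,2) tensor field. -/
def vT12 (Γ : Conn n) (m : Fin n) (T : Conn n) (k i j : Fin n) (q : Pt n) : ℝ :=
  vS Γ m (T k i j) q + (∑ a, Γ k m a q * T a i j q)
    - (∑ b, Γ b m i q * T k b j q) - (∑ b, Γ b m j q * T k i b q)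

/-- Connection components in p-representation: Γ^k_{ij} ∘ λ⁻¹. -/
def Gp (Γ : Conn n) (V : Fam n) (k i j : Fin n) (q : Pt n) : ℝ :=
  Γ k i j (lamInv V q)

/-- Scalar part of the p-representation horizontal covariant derivative:
    ∂f/∂x^m + Σ_{a,b} p_a Γ^a_{mb} ∂f/∂p_b. -/
def pS (G : Conn n) (m : Fin n) (f : Pt n → ℝ) (q : Pt n) : ℝ :=
  pdx m f q + ∑ a, ∑ b, q.2 a * G a m b q * pdv b f q

/-- p-representation ∇_m X_j of a covector field. -/
def pCov (G : Conn n) (m : Fin n) (X : Fam n) (j : Fin n) (q : Pt n) : ℝ :=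
  pS G m (X j) q - ∑ b, G b m j q * X b q

/-- p-representation ∇_m X^i of a vector field. -/
def pVec (G : Conn n) (m : Fin n) (X : Fam n) (i : Fin n) (q : Pt n) : ℝ :=
  pS G m (X i) q + ∑ a, G i m a q * X a q

/-- Force vector F^i = Φ^i + Σ_{j,k} Γ^i_{jk} v^j v^k. -/
def Fvec (Γ : Conn n) (Φ : Fam n) (i : Fin n) (q : Pt n) : ℝ :=
  Φ i q + ∑ j, ∑ k, Γ i j k q * q.2 j * q.2 k

/-- Force covector F_q = Σ_i g_{qi} F^i. -/
def Fcov (L : Fam n) (Γ : Conn n) (Φ : Fam n) (i : Fin n) (q : Pt n) : ℝ :=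
  ∑ j, gdn L i j q * Fvec Γ Φ j q

/-- p-representation force covector Q_i = Θ_i − Σ_{j,k} Γ^k_{ij} V^j p_k. -/
def Qp (Θ : Fam n) (Γ : Conn n) (V : Fam n) (i : Fin n) (q : Pt n) : ℝ :=
  Θ i q - ∑ j, ∑ k, Gp Γ V k i j q * V j q * q.2 k

/-- p-representation covector Ǔ_i = Q_i + Σ_s (∇_i V^s) p_s. -/
def Ucheck (Θ : Fam n) (Γ : Conn n) (V : Fam n) (i : Fin n) (q : Pt n) : ℝ :=
  Qp Θ Γ V i q + ∑ s, pVec (Gp Γ V) i V s q * q.2 s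

/-- v-representation covector U_i = Σ_q v^q ∇_q L_i − Σ_q L^q ∇_i L_q + F_i. -/
def Uv (L : Fam n) (ginv : Fin n → Fin n → Pt n → ℝ) (Γ : Conn n) (Φ : Fam n)
    (i : Fin n) (q : Pt n) : ℝ :=
  (∑ j, q.2 j * vCov Γ j L i q) - (∑ j, Lup L ginv j q * vCov Γ i L j q) + Fcov L Γ Φ i q

/-- v-representation dynamic curvature tensor D^k_{rij} = −∂Γ^k_{ir}/∂v^j. -/
def Dv (Γ : Conn n) (k r i j : Fin n) (q : Pt n) : ℝ := -(pdv j (Γ k i r) q)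

/-- v-representation curvature tensor R^k_{rij}. -/
def Rv (Γ : Conn n) (k r i j : Fin n) (q : Pt n) : ℝ :=
  pdx i (Γ k j r) q - pdx j (Γ k i r) q
  + (∑ m, (Γ k i m q * Γ m j r q - Γ k j m q * Γ m i r q))
  - (∑ m, ∑ s, q.2 s * Γ m i s q * pdv m (Γ k j r) q)
  + (∑ m, ∑ s, q.2 s * Γ m j s q * pdv m (Γ k i r) q)

/-- p-representation dynamic curvature tensor Ď^{kr}_{ij} = −∂Γ^k_{ij}/∂p_r. -/
def Dp (G : Conn n) (k r i j : Fin n) (q : Pt n) : ℝ := -(pdv r (G k i j) q)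

/-- p-representation curvature tensor Ř^k_{rij}. -/
def Rp (G : Conn n) (k r i j : Fin n) (q : Pt n) : ℝ :=
  pdx i (G k j r) q - pdx j (G k i r) q
  + (∑ m, (G k i m q * G m j r q - G k j m q * G m i r q))
  + (∑ m, ∑ s, q.2 s * G s m i q * pdv m (G k j r) q)
  - (∑ m, ∑ s, q.2 s * G s m j q * pdv m (G k i r) q)

/-- p-representation vector field α̌^k. -/
def alphaCheck (Θ : Fam n) (Γ : Conn n) (V : Fam n) (k : Fin n) (q : Pt n) : ℝ :=
  (∑ r, pdv k (V r) q * Ucheck Θ Γ V r q)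
  + (∑ r, pVec (Gp Γ V) r (Wp V) k q * V r q)
  + (∑ r, pdv r (Wp V k) q * Qp Θ Γ V r q)
  + (∑ r, Wp V r q * pdv k (Qp Θ Γ V r) q)
  - (∑ r, ∑ s, ∑ j, q.2 s * Dp (Gp Γ V) s k r j q * Wp V r q * V j q)

/-- v-representation vector field α^k. -/
def alphaV (L : Fam n) (ginv : Fin n → Fin n → Pt n → ℝ) (Γ : Conn n) (Φ : Fam n)
    (k : Fin n) (q : Pt n) : ℝ :=
  (∑ r, ginv r k q * Uv L ginv Γ Φ r q)
  + (∑ r, q.2 r * vVec Γ r (Lup L ginv) k q)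
  + (∑ j, Fvec Γ Φ j q * pdv j (Lup L ginv k) q)
  + (∑ j, ∑ r, ∑ s, Lup L ginv r q * ginv j k q * q.2 s * pdv j (vCov Γ s L r) q)
  + (∑ j, ∑ r, Lup L ginv r q * ginv j k q * pdv j (Fcov L Γ Φ r) q)
  + (∑ j, ∑ r, Lup L ginv r q * ginv j k q * vCov Γ j L r q)
  - (∑ j, ∑ m, ∑ r, ∑ s, ginv m k q * L s q * Dv Γ s r j m q * Lup L ginv r q * q.2 j)

/-- p-representation covector field β̌_k. -/
def betaCheck (Θ : Fam n) (Γ : Conn n) (V : Fam n) (k : Fin n) (q : Pt n) : ℝ :=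
  (∑ r, pCov (Gp Γ V) r (Ucheck Θ Γ V) k q * V r q)
  + (∑ r, pdv r (Ucheck Θ Γ V k) q * Qp Θ Γ V r q)
  + (∑ r, pVec (Gp Γ V) k V r q * Ucheck Θ Γ V r q)
  + (∑ r, pCov (Gp Γ V) k (Qp Θ Γ V) r q * Wp V r q)
  - (∑ r, ∑ s, ∑ m, (Rp (Gp Γ V) s r m k q * V m q
      - Dp (Gp Γ V) s m r k q * Qp Θ Γ V m q) * Wp V r q * q.2 s)

/-- v-representation covector field β_k. -/
def betaV (L : Fam n) (ginv : Fin n → Fin n → Pt n → ℝ) (Γ : Conn n) (Φ : Fam n)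
    (k : Fin n) (q : Pt n) : ℝ :=
  (∑ r, q.2 r * vCov Γ r (Uv L ginv Γ Φ) k q)
  + (∑ j, Fvec Γ Φ j q * pdv j (Uv L ginv Γ Φ k) q)
  - (∑ j, ∑ r, ∑ s, vCov Γ k L j q * ginv r j q * q.2 s * vCov Γ s L r q)
  - (∑ j, ∑ r, vCov Γ k L j q * ginv r j q * Fcov L Γ Φ r q)
  + (∑ r, Lup L ginv r q * vCov Γ k (Fcov L Γ Φ) r q)
  + (∑ m, ∑ r, Lup L ginv r q * q.2 m * vCov2 Γ k (fun m' r' => vCov Γ m' L r') m r q)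
  - (∑ j, ∑ r, ∑ s, Lup L ginv r q * vCov Γ k L j q * ginv s j q * pdv s (Fcov L Γ Φ r) q)
  - (∑ j, ∑ m, ∑ r, ∑ s, Lup L ginv r q * vCov Γ k L j q * ginv s j q * q.2 m
      * pdv s (vCov Γ m L r) q)
  - (∑ r, ∑ s, ∑ m, Rv Γ s r m k q * q.2 m * Lup L ginv r q * L s q)
  + (∑ j, ∑ r, ∑ s, ∑ m, ∑ a, ginv a j q * vCov Γ k L j q * Dv Γ s m r a q * q.2 m
      * Lup L ginv r q * L s q)
  + (∑ r, ∑ s, ∑ m, ∑ a, ginv a m q * Dv Γ s r k a q * Fcov L Γ Φ m q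
      * Lup L ginv r q * L s q)

/-- v-representation covector field η_k = β_k − Σ_s U_k α^s L_s / |L|². -/
def etaV (L : Fam n) (ginv : Fin n → Fin n → Pt n → ℝ) (Γ : Conn n) (Φ : Fam n)
    (k : Fin n) (q : Pt n) : ℝ :=
  betaV L ginv Γ Φ k q
    - ∑ s, Uv L ginv Γ Φ k q * alphaV L ginv Γ Φ s q * L s q / L2 L ginv q

/-- p-representation tensor Ǎ^{rs} = ∂W^s/∂p_r. -/
def Acheck (V : Fam n) (r s : Fin n) (q : Pt n) : ℝ := pdv r (Wp V s) q

/-- v-representation tensor A^{rs} = Σ_q g^{qr} ∂L^s/∂v^q. -/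
def Av (L : Fam n) (ginv : Fin n → Fin n → Pt n → ℝ) (r s : Fin n) (q : Pt n) : ℝ :=
  ∑ j, ginv j r q * pdv j (Lup L ginv s) q

/-- p-representation tensor B̌^r_s. -/
def Bcheck (Θ : Fam n) (Γ : Conn n) (V : Fam n) (r s : Fin n) (q : Pt n) : ℝ :=
  pdv r (Ucheck Θ Γ V s) q
  + (∑ m, ∑ k, Wp V k q * q.2 m * Dp (Gp Γ V) m r k s q)
  - pVec (Gp Γ V) s (Wp V) r q
  + (∑ m, (pdv m (Wp V r) q - pdv r (Wp V m) q) * Ucheck Θ Γ V s q * q.2 m / Omga V q)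

/-- v-representation tensor B^r_s. -/
def Bv (L : Fam n) (ginv : Fin n → Fin n → Pt n → ℝ) (Γ : Conn n) (Φ : Fam n)
    (r s : Fin n) (q : Pt n) : ℝ :=
  (∑ j, ginv j r q * pdv j (Uv L ginv Γ Φ s) q)
  + (∑ m, ∑ k, ∑ j, ginv j r q * Lup L ginv k q * L m q * Dv Γ m k s j q)
  - vVec Γ s (Lup L ginv) r q
  + (∑ j, ∑ k, vCov Γ s L k q * ginv j k q * pdv j (Lup L ginv r) q)
  + (∑ j, ∑ m, (ginv j m q * pdv j (Lup L ginv r) q - ginv j r q * pdv j (Lup L ginv m) q)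
      * Uv L ginv Γ Φ s q * L m q / L2 L ginv q)

/-- p-representation tensor Č_{rs}. -/
def Ccheck (Θ : Fam n) (Γ : Conn n) (V : Fam n) (r s : Fin n) (q : Pt n) : ℝ :=
  pCov (Gp Γ V) r (Ucheck Θ Γ V) s q
  - (∑ m, (Ucheck Θ Γ V r q * pdv m (Ucheck Θ Γ V s) q
      + Ucheck Θ Γ V s q * pVec (Gp Γ V) r (Wp V) m q) * q.2 m / Omga V q)
  - (∑ k, ∑ j, ((∑ m, Dp (Gp Γ V) m j k s q * Ucheck Θ Γ V r q * q.2 m / Omga V q)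
      + Rp (Gp Γ V) j k r s q / 2) * Wp V k q * q.2 j)

/-- v-representation tensor C_{rs}. -/
def Cv (L : Fam n) (ginv : Fin n → Fin n → Pt n → ℝ) (Γ : Conn n) (Φ : Fam n)
    (r s : Fin n) (q : Pt n) : ℝ :=
  vCov Γ r (Uv L ginv Γ Φ) s q
  - (∑ j, ∑ k, vCov Γ r L j q * ginv k j q * pdv k (Uv L ginv Γ Φ s) q)
  - (∑ m, Uv L ginv Γ Φ s q * vVec Γ r (Lup L ginv) m q * L m q / L2 L ginv q)
  - (∑ j, ∑ m, Uv L ginv Γ Φ r q * ginv j m q * pdv j (Uv L ginv Γ Φ s) q * L m q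
      / L2 L ginv q)
  + (∑ m, ∑ j, ∑ k, Uv L ginv Γ Φ s q * vCov Γ r L k q * ginv j k q
      * pdv j (Lup L ginv m) q * L m q / L2 L ginv q)
  - (∑ k, ∑ j, ∑ m, ∑ a, ginv a j q * Dv Γ m k s a q * Uv L ginv Γ Φ r q * L m q
      * Lup L ginv k q * L j q / L2 L ginv q)
  - (∑ k, ∑ j, (Rv Γ j k r s q / 2) * Lup L ginv k q * L j q)
  - (∑ k, ∑ j, ∑ m, ∑ a, vCov Γ r L m q * Dv Γ j k s a q * ginv a m q
      * Lup L ginv k q * L j q)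

/-- Gauge-transformed connection Γ' = Γ + T. -/
def addT (Γ T : Conn n) : Conn n := fun k i j q => Γ k i j q + T k i j q

/-- The quantity Ξ_{rs} appearing in the gauge transformation rule for C. -/
def XiG (L : Fam n) (ginv : Fin n → Fin n → Pt n → ℝ) (Γ : Conn n) (Φ : Fam n)
    (T : Conn n) (r s : Fin n) (q : Pt n) : ℝ :=
  (∑ j, ∑ b, ∑ m, T b r j q * L b q * Pv L ginv j m q * Bv L ginv Γ Φ m s q)
  + (∑ j, ∑ b, ∑ m, ∑ a, ∑ c, ∑ e, T b r j q * L b q * Pv L ginv j m q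
      * Av L ginv m a q * Pv L ginv c a q * T e s c q * L e q)

end

/-! Under the gauge transformation `U` shifts by `U'_s - U_s = L^k L_m T^m_{sk}`: the change
of `F_i` cancels the part of the change of `v^q ∇_q L_i` quadratic in `v`. Differentiating this
shift, the derivative of `T` cancels against the change of the dynamic-curvature term of `B`,
and the terms `v^a T^b_{as} ∂_b L^r` cancel between `∇_s L^r` and `∇_s L_k`. What survives is
`L_m T^m_{sj}` contracted with `A^{rj} - A^{jr}`, once directly and once, through the shift of
`U` in the last summand of `B`, along `L^j L_k / |L|²`; together this is the contraction
through the projector `P^j_k`. -/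

open Finset

section Calculus
variable {n : ℕ}

@[fun_prop]
lemma contDiff_pdv {f : Pt n → ℝ} (hf : ContDiff ℝ (⊤ : ℕ∞) f) (m : Fin n) :
    ContDiff ℝ (⊤ : ℕ∞) (pdv m f) :=
  (hf.fderiv_right (by exact_mod_cast le_top)).clm_apply contDiff_const

@[fun_prop]
lemma contDiff_pdx {f : Pt n → ℝ} (hf : ContDiff ℝ (⊤ : ℕ∞) f) (m : Fin n) :
    ContDiff ℝ (⊤ : ℕ∞) (pdx m f) :=
  (hf.fderiv_right (by exact_mod_cast le_top)).clm_apply contDiff_const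

lemma differentiableAt_of_contDiff {f : Pt n → ℝ} (hf : ContDiff ℝ (⊤ : ℕ∞) f) (q : Pt n) :
    DifferentiableAt ℝ f q :=
  hf.contDiffAt.differentiableAt (by simp)

variable {f g : Pt n → ℝ} {q : Pt n}

lemma pdv_add (m : Fin n) (hf : DifferentiableAt ℝ f q) (hg : DifferentiableAt ℝ g q) :
    pdv m (fun x => f x + g x) q = pdv m f q + pdv m g q := by
  simp [pdv, fderiv_fun_add hf hg]

lemma pdv_mul (m : Fin n) (hf : DifferentiableAt ℝ f q) (hg : DifferentiableAt ℝ g q) :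
    pdv m (fun x => f x * g x) q = pdv m f q * g q + f q * pdv m g q := by
  simp [pdv, fderiv_fun_mul hf hg]
  ring

lemma pdv_sum {ι : Type*} (s : Finset ι) {F : ι → Pt n → ℝ} (m : Fin n)
    (hF : ∀ i ∈ s, DifferentiableAt ℝ (F i) q) :
    pdv m (fun x => ∑ i ∈ s, F i x) q = ∑ i ∈ s, pdv m (F i) q := by
  simp [pdv, fderiv_fun_sum hF]

end Calculus

section Kronecker
variable {n : ℕ}

lemma kron_comm (i j : Fin n) : kron i j = kron j i := by
  simp [kron, eq_comm]

lemma sum_kron_mul (j : Fin n) (f : Fin n → ℝ) : ∑ k, kron j k * f k = f j := by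
  simp [kron]

lemma sum_mul_kron (j : Fin n) (f : Fin n → ℝ) : ∑ k, f k * kron k j = f j := by
  simp [kron]

lemma sum_mul_eq_kron_comm {A B : Fin n → Fin n → ℝ}
    (h : ∀ i k, ∑ j, A i j * B j k = kron i k) (i k : Fin n) :
    ∑ j, B i j * A j k = kron i k := by
  have hAB : Matrix.of A * Matrix.of B = 1 := by
    ext i k
    simp [Matrix.mul_apply, Matrix.one_apply, h, kron]
  have hBA : Matrix.of B * Matrix.of A = 1 := mul_eq_one_comm.mp hAB
  simpa [Matrix.mul_apply, Matrix.one_apply, kron] using congrFun₂ hBA i k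

end Kronecker

def lowerT {n : ℕ} (L : Fam n) (T : Conn n) (s j : Fin n) (q : Pt n) : ℝ :=
  ∑ m, L m q * T m s j q

section Gauge
variable {n : ℕ} {L : Fam n} {ginv : Fin n → Fin n → Pt n → ℝ} {q : Pt n}

lemma sum_gdn_mul_ginv (hginv : ∀ s k, ∑ r, ginv s r q * gdn L r k q = kron s k)
    (i k : Fin n) : ∑ j, gdn L i j q * ginv j k q = kron i k :=
  sum_mul_eq_kron_comm (A := fun i j => ginv i j q) (B := fun i j => gdn L i j q) hginv i k

lemma sum_Lup_mul_gdn (hginv : ∀ s k, ∑ r, ginv s r q * gdn L r k q = kron s k)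
    (b : Fin n) : ∑ j, Lup L ginv j q * gdn L j b q = L b q := by
  simp only [Lup, sum_mul]
  rw [sum_comm]
  simp only [mul_assoc, ← mul_sum, hginv, sum_mul_kron]

variable (Γ T : Conn n)

lemma vCov_addT (X : Fam n) (m j : Fin n) :
    vCov (addT Γ T) m X j q
      = vCov Γ m X j q - (∑ a, ∑ b, q.2 a * T b a m q * pdv b (X j) q)
        - ∑ b, X b q * T b m j q := by
  simp only [vCov, vS, addT, add_mul, mul_add, sum_add_distrib, mul_comm (T _ m j q)]
  ring

lemma vVec_addT (X : Fam n) (m i : Fin n) :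
    vVec (addT Γ T) m X i q
      = vVec Γ m X i q - (∑ a, ∑ b, q.2 a * T b a m q * pdv b (X i) q)
        + ∑ a, T i m a q * X a q := by
  simp only [vVec, vS, addT, add_mul, mul_add, sum_add_distrib]
  ring

lemma Fcov_addT (Φ : Fam n) (i : Fin n) :
    Fcov L (addT Γ T) Φ i q
      = Fcov L Γ Φ i q + ∑ j, ∑ k, ∑ l, gdn L i j q * T j k l q * q.2 k * q.2 l := by
  simp only [Fcov, Fvec, addT, add_mul, mul_add, sum_add_distrib, mul_sum, mul_assoc,
    add_assoc]

lemma Dv_addT (m k s j : Fin n) (hΓ : DifferentiableAt ℝ (Γ m s k) q)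
    (hT : DifferentiableAt ℝ (T m s k) q) :
    Dv (addT Γ T) m k s j q = Dv Γ m k s j q - pdv j (T m s k) q := by
  rw [Dv, Dv, show addT Γ T m s k = fun x => Γ m s k x + T m s k x from rfl, pdv_add j hΓ hT]
  ring

lemma Uv_addT (hginv : ∀ s k, ∑ r, ginv s r q * gdn L r k q = kron s k)
    (Φ : Fam n) (s : Fin n) :
    Uv L ginv (addT Γ T) Φ s q
      = Uv L ginv Γ Φ s q + ∑ k, Lup L ginv k q * lowerT L T s k q := by
  have hforce : ∑ j, q.2 j * ∑ a, ∑ b, q.2 a * T b a j q * pdv b (L s) q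
      = ∑ j, ∑ k, ∑ l, gdn L s j q * T j k l q * q.2 k * q.2 l := by
    simp only [mul_sum, gdn]
    rw [sum_comm_cycle]
    refine sum_congr rfl fun b _ => ?_
    rw [sum_comm]
    exact sum_congr rfl fun a _ => sum_congr rfl fun j _ => by ring
  have hLup : ∑ j, Lup L ginv j q * ∑ a, ∑ b, q.2 a * T b a s q * pdv b (L j) q
      = ∑ j, q.2 j * ∑ b, L b q * T b j s q := by
    simp only [mul_sum]
    rw [← sum_comm_cycle]
    refine sum_congr rfl fun a _ => sum_congr rfl fun b _ => ?_
    rw [← sum_Lup_mul_gdn hginv b, sum_mul, mul_sum]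
    exact sum_congr rfl fun j _ => by simp only [gdn]; ring
  simp only [Uv, vCov_addT, Fcov_addT, lowerT, mul_sub, sum_sub_distrib]
  linear_combination -hforce + hLup

end Gauge

section Smooth
variable {n : ℕ} {L : Fam n} {ginv : Fin n → Fin n → Pt n → ℝ} {Γ T : Conn n} {Φ : Fam n}

lemma pdv_lowerT {q : Pt n} (hL : ∀ m, DifferentiableAt ℝ (L m) q) (s k : Fin n)
    (hT : ∀ m, DifferentiableAt ℝ (T m s k) q) (j : Fin n) :
    pdv j (lowerT L T s k) q
      = ∑ m, (pdv j (L m) q * T m s k q + L m q * pdv j (T m s k) q) := by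
  change pdv j (fun x => ∑ m, L m x * T m s k x) q = _
  rw [pdv_sum (F := fun m x => L m x * T m s k x) _ _ fun m _ => (hL m).mul (hT m)]
  exact sum_congr rfl fun m _ => pdv_mul j (hL m) (hT m)

lemma pdv_Uv_addT (hL : ∀ i, ContDiff ℝ (⊤ : ℕ∞) (L i))
    (hg : ∀ i j, ContDiff ℝ (⊤ : ℕ∞) (ginv i j))
    (hginv : ∀ q s k, ∑ r, ginv s r q * gdn L r k q = kron s k)
    (hΓ : ∀ k i j, ContDiff ℝ (⊤ : ℕ∞) (Γ k i j)) (hΦ : ∀ i, ContDiff ℝ (⊤ : ℕ∞) (Φ i))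
    (hT : ∀ k i j, ContDiff ℝ (⊤ : ℕ∞) (T k i j)) (q : Pt n) (s j : Fin n) :
    pdv j (Uv L ginv (addT Γ T) Φ s) q
      = pdv j (Uv L ginv Γ Φ s) q
        + ∑ k, (pdv j (Lup L ginv k) q * lowerT L T s k q
          + Lup L ginv k q * ∑ m, (pdv j (L m) q * T m s k q + L m q * pdv j (T m s k) q)) := by
  have hLup : ∀ k, ContDiff ℝ (⊤ : ℕ∞) (Lup L ginv k) := fun k => by unfold Lup; fun_prop
  have hlowerT : ∀ k, ContDiff ℝ (⊤ : ℕ∞) (lowerT L T s k) := fun k => by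
    unfold lowerT; fun_prop
  have hU : ContDiff ℝ (⊤ : ℕ∞) (Uv L ginv Γ Φ s) := by
    unfold Uv vCov vS Fcov Fvec gdn Lup; fun_prop
  have hdiff : ∀ {f : Pt n → ℝ}, ContDiff ℝ (⊤ : ℕ∞) f → DifferentiableAt ℝ f q :=
    fun hf => differentiableAt_of_contDiff hf q
  rw [show Uv L ginv (addT Γ T) Φ s = fun x => Uv L ginv Γ Φ s x
      + ∑ k, Lup L ginv k x * lowerT L T s k x from funext fun x => Uv_addT Γ T (hginv x) Φ s,
    pdv_add j (hdiff hU) (hdiff (by fun_prop)),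
    pdv_sum (F := fun k x => Lup L ginv k x * lowerT L T s k x) _ _
      fun k _ => (hdiff (hLup k)).mul (hdiff (hlowerT k))]
  congr 1
  refine sum_congr rfl fun k _ => ?_
  rw [pdv_mul j (hdiff (hLup k)) (hdiff (hlowerT k)),
    pdv_lowerT (fun m => hdiff (hL m)) s k (fun m => hdiff (hT m s k))]

lemma sum_ginv_mul_pdv_Uv_addT (hL : ∀ i, ContDiff ℝ (⊤ : ℕ∞) (L i))
    (hg : ∀ i j, ContDiff ℝ (⊤ : ℕ∞) (ginv i j))
    (hginv : ∀ q s k, ∑ r, ginv s r q * gdn L r k q = kron s k)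
    (hΓ : ∀ k i j, ContDiff ℝ (⊤ : ℕ∞) (Γ k i j)) (hΦ : ∀ i, ContDiff ℝ (⊤ : ℕ∞) (Φ i))
    (hT : ∀ k i j, ContDiff ℝ (⊤ : ℕ∞) (T k i j)) (q : Pt n) (r s : Fin n) :
    ∑ j, ginv j r q * pdv j (Uv L ginv (addT Γ T) Φ s) q
      = ∑ j, ginv j r q * pdv j (Uv L ginv Γ Φ s) q
        + ∑ k, lowerT L T s k q * Av L ginv r k q + ∑ k, T r s k q * Lup L ginv k q
        + ∑ m, ∑ k, ∑ j, ginv j r q * Lup L ginv k q * L m q * pdv j (T m s k) q := by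
  simp only [pdv_Uv_addT hL hg hginv hΓ hΦ hT, mul_add, mul_sum, sum_add_distrib]
  have hA : ∑ j, ∑ k, ginv j r q * (pdv j (Lup L ginv k) q * lowerT L T s k q)
      = ∑ k, lowerT L T s k q * Av L ginv r k q := by
    rw [sum_comm]
    simp only [Av, mul_sum]
    exact sum_congr rfl fun k _ => sum_congr rfl fun j _ => by ring
  have hB : ∑ j, ∑ k, ∑ m, ginv j r q * (Lup L ginv k q * (pdv j (L m) q * T m s k q))
      = ∑ k, T r s k q * Lup L ginv k q := by
    rw [← sum_comm_cycle]
    refine sum_congr rfl fun k _ => ?_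
    calc _ = ∑ m, Lup L ginv k q * T m s k q * ∑ j, gdn L m j q * ginv j r q := by
          simp only [mul_sum, gdn]
          exact sum_congr rfl fun m _ => sum_congr rfl fun j _ => by ring
      _ = T r s k q * Lup L ginv k q := by
          simp only [sum_gdn_mul_ginv (hginv q), sum_mul_kron]
          ring
  have hC : ∑ j, ∑ k, ∑ m, ginv j r q * (Lup L ginv k q * (L m q * pdv j (T m s k) q))
      = ∑ m, ∑ k, ∑ j, ginv j r q * Lup L ginv k q * L m q * pdv j (T m s k) q := by
    rw [sum_comm_cycle]
    refine sum_congr rfl fun m _ => ?_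
    rw [sum_comm]
    exact sum_congr rfl fun k _ => sum_congr rfl fun j _ => by ring
  linear_combination hA + hB + hC

end Smooth

section Contraction
variable {n : ℕ} {L : Fam n} {ginv : Fin n → Fin n → Pt n → ℝ} {q : Pt n} (Γ T : Conn n)

lemma sum_vCov_addT_mul (hginv : ∀ s k, ∑ r, ginv s r q * gdn L r k q = kron s k)
    (r s : Fin n) :
    ∑ j, ∑ k, vCov (addT Γ T) s L k q * ginv j k q * pdv j (Lup L ginv r) q
      = ∑ j, ∑ k, vCov Γ s L k q * ginv j k q * pdv j (Lup L ginv r) q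
        - ∑ a, ∑ b, q.2 a * T b a s q * pdv b (Lup L ginv r) q
        - ∑ k, lowerT L T s k q * Av L ginv k r q := by
  have hvert : ∀ j, ∑ k, (∑ a, ∑ b, q.2 a * T b a s q * pdv b (L k) q) * ginv j k q
      = ∑ a, q.2 a * T j a s q := by
    intro j
    simp only [sum_mul]
    rw [← sum_comm_cycle]
    refine sum_congr rfl fun a _ => ?_
    calc _ = ∑ b, q.2 a * T b a s q * ∑ k, ginv j k q * gdn L k b q := by
          simp only [mul_sum, gdn]
          exact sum_congr rfl fun b _ => sum_congr rfl fun k _ => by ring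
      _ = q.2 a * T j a s q := by simp only [hginv, kron_comm j, sum_mul_kron]
  have h1 : ∑ j, ∑ k, (∑ a, ∑ b, q.2 a * T b a s q * pdv b (L k) q) * ginv j k q
        * pdv j (Lup L ginv r) q
      = ∑ a, ∑ b, q.2 a * T b a s q * pdv b (Lup L ginv r) q := by
    rw [sum_congr rfl fun j _ => by rw [← sum_mul, hvert j]]
    simp only [sum_mul]
    exact sum_comm
  have h2 : ∑ j, ∑ k, (∑ b, L b q * T b s k q) * ginv j k q * pdv j (Lup L ginv r) q
      = ∑ k, lowerT L T s k q * Av L ginv k r q := by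
    rw [sum_comm]
    simp only [Av, lowerT, mul_sum, mul_assoc]
  simp only [vCov_addT, sub_mul, sum_sub_distrib]
  linear_combination -h1 - h2

lemma sum_sub_mul_add_div (r : Fin n) (u t : ℝ) :
    ∑ j, ∑ m, (ginv j m q * pdv j (Lup L ginv r) q - ginv j r q * pdv j (Lup L ginv m) q)
        * (u + t) * L m q / L2 L ginv q
      = ∑ j, ∑ m, (ginv j m q * pdv j (Lup L ginv r) q - ginv j r q * pdv j (Lup L ginv m) q)
        * u * L m q / L2 L ginv q
        - t * (∑ m, L m q * (Av L ginv r m q - Av L ginv m r q)) / L2 L ginv q := by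
  have ht : t * (∑ m, L m q * (Av L ginv r m q - Av L ginv m r q)) / L2 L ginv q
      = ∑ j, ∑ m, (ginv j r q * pdv j (Lup L ginv m) q - ginv j m q * pdv j (Lup L ginv r) q)
        * t * L m q / L2 L ginv q := by
    simp only [Av, ← sum_sub_distrib, mul_sum, sum_div]
    rw [sum_comm]
    exact sum_congr rfl fun j _ => sum_congr rfl fun m _ => by ring
  rw [ht, ← sum_sub_distrib]
  refine sum_congr rfl fun j _ => ?_
  rw [← sum_sub_distrib]
  exact sum_congr rfl fun m _ => by ring

end Contraction

section Projector
variable {n : ℕ} {L : Fam n} {ginv : Fin n → Fin n → Pt n → ℝ} {T : Conn n} {q : Pt n}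

lemma sum_Pv_mul (j : Fin n) (c : Fin n → ℝ) :
    ∑ k, Pv L ginv j k q * c k
      = c j - Lup L ginv j q * (∑ k, L k q * c k) / L2 L ginv q := by
  simp only [Pv, sub_mul, sum_sub_distrib, sum_kron_mul, mul_sum, sum_div]
  exact congrArg _ (sum_congr rfl fun k _ => by ring)

lemma sum_lowerT_mul_Pv_mul (s : Fin n) (c : Fin n → ℝ) :
    ∑ m, ∑ j, ∑ k, L m q * T m s j q * Pv L ginv j k q * c k
      = ∑ j, lowerT L T s j q * c j
        - (∑ j, Lup L ginv j q * lowerT L T s j q) * (∑ k, L k q * c k) / L2 L ginv q := by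
  calc _ = ∑ j, lowerT L T s j q
        * (c j - Lup L ginv j q * (∑ k, L k q * c k) / L2 L ginv q) := by
        simp only [mul_assoc, ← mul_sum, sum_Pv_mul]
        simp only [lowerT, sum_mul, mul_sum, mul_assoc]
        exact sum_comm
    _ = _ := by
        simp only [mul_sub, sum_sub_distrib, sum_mul, sum_div]
        exact congrArg _ (sum_congr rfl fun j _ => by ring)

end Projector

theorem stmt13_general
    (n : ℕ)
    (L : Fam n) (ginv : Fin n → Fin n → Pt n → ℝ)
    (hL : ∀ i, ContDiff ℝ (⊤ : ℕ∞) (L i))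
    (hginvSm : ∀ i j, ContDiff ℝ (⊤ : ℕ∞) (ginv i j))
    (hginv : ∀ (q : Pt n) (s k : Fin n), (∑ r, ginv s r q * gdn L r k q) = kron s k)
    (Γ : Conn n)
    (hΓ : ∀ k i j, ContDiff ℝ (⊤ : ℕ∞) (Γ k i j))
    (Φ : Fam n) (hΦ : ∀ i, ContDiff ℝ (⊤ : ℕ∞) (Φ i))
    (T : Conn n)
    (hT : ∀ k i j, ContDiff ℝ (⊤ : ℕ∞) (T k i j)) :
    ∀ q : Pt n, L2 L ginv q ≠ 0 → ∀ r s : Fin n,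
      Bv L ginv (addT Γ T) Φ r s q
        = Bv L ginv Γ Φ r s q
          + ∑ m, ∑ j, ∑ k, L m q * T m s j q * Pv L ginv j k q
              * (Av L ginv r k q - Av L ginv k r q) := by
  intro q _ r s
  have hDv : ∀ m k j, Dv (addT Γ T) m k s j q = Dv Γ m k s j q - pdv j (T m s k) q :=
    fun m k j => Dv_addT Γ T m k s j (differentiableAt_of_contDiff (hΓ m s k) q)
      (differentiableAt_of_contDiff (hT m s k) q)
  rw [Bv, Bv, sum_ginv_mul_pdv_Uv_addT hL hginvSm hginv hΓ hΦ hT, vVec_addT,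
    sum_vCov_addT_mul Γ T (hginv q), Uv_addT Γ T (hginv q), sum_sub_mul_add_div,
    sum_lowerT_mul_Pv_mul]
  simp only [hDv, mul_sub, sum_sub_distrib]
  ring

theorem stmt13
    (n : ℕ) (hn : 2 ≤ n)
    (L V : Fam n) (ginv : Fin n → Fin n → Pt n → ℝ)
    (hL : ∀ i, ContDiff ℝ (⊤ : ℕ∞) (L i))
    (hV : ∀ i, ContDiff ℝ (⊤ : ℕ∞) (V i))
    (hginvSm : ∀ i j, ContDiff ℝ (⊤ : ℕ∞) (ginv i j))
    (hLeft : ∀ q : Pt n, lamInv V (lam L q) = q)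
    (hRight : ∀ q : Pt n, lam L (lamInv V q) = q)
    (hginv : ∀ (q : Pt n) (s k : Fin n), (∑ r, ginv s r q * gdn L r k q) = kron s k)
    (Γ : Conn n)
    (hΓ : ∀ k i j, ContDiff ℝ (⊤ : ℕ∞) (Γ k i j))
    (hΓsym : ∀ (k i j : Fin n) (q : Pt n), Γ k i j q = Γ k j i q)
    (Φ : Fam n) (hΦ : ∀ i, ContDiff ℝ (⊤ : ℕ∞) (Φ i))
    (T : Conn n)
    (hT : ∀ k i j, ContDiff ℝ (⊤ : ℕ∞) (T k i j))
    (hTsym : ∀ (k i j : Fin n) (q : Pt n), T k i j q = T k j i q) :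
    ∀ q : Pt n, L2 L ginv q ≠ 0 → ∀ r s : Fin n,
      Bv L ginv (addT Γ T) Φ r s q
        = Bv L ginv Γ Φ r s q
          + ∑ m, ∑ j, ∑ k, L m q * T m s j q * Pv L ginv j k q
              * (Av L ginv r k q - Av L ginv k r q) :=
  stmt13_general n L ginv hL hginvSm hginv Γ hΓ Φ hΦ T hT
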